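/- arXiv:2209.07056 — 8 statements merged into one kernel-verified Lean document; each statement's English description precedes it below -/
import Mathlib

section
/- Let u and v be real numbers with 15/16 ≤ u < v < 1. If u + (1-u)^(3/2) > v, then 4(1-u)(1-v) - (1-uv)^2 > 0. -/
theorem stmt_0 (u v : ℝ) (h1 : 15/16 ≤ u) (h2 : u < v) (h3 : v < 1)
    (h : u + Real.sqrt ((1 - u) ^ 3) > v) :
    4 * (1 - u) * (1 - v) - (1 - u * v) ^ 2 > 0 := by
  set s := Real.sqrt (1 - u) with hs
  have hu1 : u < 1 := lt_trans h2 h3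
  have hs0 : 0 ≤ s := Real.sqrt_nonneg _
  have hsq : s ^ 2 = 1 - u := by
    rw [hs, Real.sq_sqrt (by linarith)]
  have hsle : s ≤ 1 / 4 := by
    rw [hs]
    have : Real.sqrt (1 - u) ≤ Real.sqrt (1 / 16) := by
      apply Real.sqrt_le_sqrt; linarith
    calc Real.sqrt (1 - u) ≤ Real.sqrt (1/16) := this
      _ = 1/4 := by
        rw [show (1:ℝ)/16 = (1/4)^2 by norm_num, Real.sqrt_sq (by norm_num)]
  have hcube : Real.sqrt ((1 - u) ^ 3) = s ^ 3 := by
    rw [← hsq]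
    rw [show (s ^ 2) ^ 3 = (s ^ 3) ^ 2 by ring, Real.sqrt_sq (by positivity)]
  rw [hcube] at h
  have hs1 : 0 < s := Real.sqrt_pos.mpr (by linarith)
  set b := 1 - v with hbdef
  have hb1 : b > s ^ 2 - s ^ 3 := by nlinarith
  have hb2 : b < s ^ 2 := by nlinarith
  have hb0 : 0 < b := by simp only [hbdef]; linarith
  -- endpoint values
  have hE1 : s ^ 6 * (3 - 6*s + s^2 + 2*s^3 - s^4) > 0 := by
    have hfac : (0:ℝ) < 3 - 6*s + s^2 + 2*s^3 - s^4 := by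
      nlinarith [sq_nonneg s, mul_pos hs1 hs1, mul_pos (mul_pos hs1 hs1) hs1,
        mul_nonneg (sq_nonneg s) (mul_nonneg hs0 (by linarith : (0:ℝ) ≤ 1/4 - s))]
    exact mul_pos (pow_pos hs1 6) hfac
  have hE2 : s ^ 6 * (4 - s^2) > 0 := by
    have : (0:ℝ) < 4 - s^2 := by nlinarith
    exact mul_pos (pow_pos hs1 6) this
  have hT1 : (b - (s^2 - s^3)) * (s^2 - b) * (1 - s^2)^2 * s^3 ≥ 0 := by
    have := mul_pos (sub_pos.mpr hb1) (sub_pos.mpr hb2)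
    positivity
  have hT2 : s ^ 6 * (3 - 6*s + s^2 + 2*s^3 - s^4) * (s^2 - b) > 0 :=
    mul_pos hE1 (sub_pos.mpr hb2)
  have hT3 : s ^ 6 * (4 - s^2) * (b - (s^2 - s^3)) > 0 :=
    mul_pos hE2 (sub_pos.mpr hb1)
  have key : (4 * s^2 * b - (s^2 + b - s^2 * b)^2) * s^3 > 0 := by
    have hid : (4 * s^2 * b - (s^2 + b - s^2 * b)^2) * s^3 =
        s ^ 6 * (3 - 6*s + s^2 + 2*s^3 - s^4) * (s^2 - b)
        + s ^ 6 * (4 - s^2) * (b - (s^2 - s^3))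
        + (b - (s^2 - s^3)) * (s^2 - b) * (1 - s^2)^2 * s^3 := by ring
    rw [hid]; linarith
  have hf : 4 * s^2 * b - (s^2 + b - s^2 * b)^2 > 0 := by
    by_contra hc
    push_neg at hc
    nlinarith [mul_nonpos_of_nonpos_of_nonneg hc (le_of_lt (pow_pos hs1 3))]
  have hu : u = 1 - s^2 := by linarith
  have hv : v = 1 - b := by simp [hbdef]
  rw [hu, hv]
  nlinarith [hf]
end

section
/- Let u be a real number with 15/16 ≤ u < 1 and let t₂(u) = (3u + 2(1-u)^(3/2) - 2)/u². Then u + (1-u)^(3/2) < t₂(u). -/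
theorem stmt_2 (u : ℝ) (h1 : 15/16 ≤ u) (h2 : u < 1) :
    u + Real.sqrt ((1 - u) ^ 3) < (3 * u + 2 * Real.sqrt ((1 - u) ^ 3) - 2) / u ^ 2 := by
  have hu0 : (0:ℝ) < u := by linarith
  have hu2 : (0:ℝ) < u ^ 2 := by positivity
  have h1u : (0:ℝ) < 1 - u := by linarith
  set s := Real.sqrt ((1 - u) ^ 3) with hs
  have hs4 : 4 * (1 - u) ^ 2 ≤ s := by
    rw [hs, Real.le_sqrt (by positivity) (pow_nonneg h1u.le 3)]
    nlinarith [sq_nonneg (1 - u), mul_pos h1u h1u]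
  rw [lt_div_iff₀ hu2]
  nlinarith [hs4, mul_le_mul_of_nonneg_left hs4 (by nlinarith : (0:ℝ) ≤ 2 - u ^ 2), mul_pos (mul_pos h1u h1u) (by nlinarith : (0:ℝ) < 6 - u - 4 * u ^ 2)]
end

section
/- Let x > 0 be real with x ≥ 6, and set w = √(x² − 2π²/3) and y = √(x² + 2π²/3) (assuming x² > 2π²/3). Define g = ((1 − 1/w⁶)(1 − 1/y⁶))/(1 + 1/x⁶)². Then g ≥ 1 − 5/x⁶. -/
lemma key_8 (t a : ℝ) (ht : 36 ≤ t) (ha0 : 0 < a) (ha : a ≤ 7) :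
    (1 - 1 / (t - a) ^ 3) * (1 - 1 / (t + a) ^ 3) / (1 + 1 / t ^ 3) ^ 2
      ≥ 1 - 5 / t ^ 3 := by
  have htpos : (0:ℝ) < t := by linarith
  have hta : (0:ℝ) < t - a := by linarith
  have hta' : (0:ℝ) < t + a := by linarith
  have hB : (0:ℝ) < (1 + 1 / t ^ 3) ^ 2 := by positivity
  rw [ge_iff_le, le_div_iff₀ hB]
  have h1 : (1 - 5 / t ^ 3) * (1 + 1 / t ^ 3) ^ 2
      = 1 - 3 / t ^ 3 - 9 / t ^ 6 - 5 / t ^ 9 := by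
    field_simp
    ring
  have h2 : 1 / (t - a) ^ 3 + 1 / (t + a) ^ 3 ≤ 3 / t ^ 3 := by
    rw [div_add_div _ _ (by positivity) (by positivity), div_le_div_iff₀ (by positivity) (by positivity)]
    have ha2 : a ^ 2 ≤ 49 := by nlinarith
    have ht2 : 1296 ≤ t ^ 2 := by nlinarith
    nlinarith [sq_nonneg a, sq_nonneg t, mul_pos htpos htpos,
      mul_nonneg (mul_nonneg (sq_nonneg t) (sq_nonneg t)) (sq_nonneg a),
      mul_nonneg (sq_nonneg t) (sq_nonneg (a^2)),
      mul_le_mul_of_nonneg_left ha2 (le_of_lt (by positivity : (0:ℝ) < t^4)),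
      mul_le_mul_of_nonneg_right ht2 (le_of_lt (by positivity : (0:ℝ) < t^4))]
  have h3 : (1 - 1 / (t - a) ^ 3) * (1 - 1 / (t + a) ^ 3)
      = 1 - (1 / (t - a) ^ 3 + 1 / (t + a) ^ 3) + (1 / (t - a) ^ 3) * (1 / (t + a) ^ 3) := by
    ring
  have h4 : (0:ℝ) < (1 / (t - a) ^ 3) * (1 / (t + a) ^ 3) := by positivity
  have h5 : (0:ℝ) < 9 / t ^ 6 := by positivity
  have h6 : (0:ℝ) < 5 / t ^ 9 := by positivity
  linarith

open Real in
theorem stmt_8 (x : ℝ) (hx : 6 ≤ x)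
    (w y : ℝ) (hw : w = Real.sqrt (x ^ 2 - 2 * π ^ 2 / 3))
    (hy : y = Real.sqrt (x ^ 2 + 2 * π ^ 2 / 3)) :
    ((1 - 1 / w ^ 6) * (1 - 1 / y ^ 6)) / (1 + 1 / x ^ 6) ^ 2 ≥ 1 - 5 / x ^ 6 := by
  have hpi : π < 3.15 := by linarith [Real.pi_lt_d2]
  have hpi0 : 0 < π := Real.pi_pos
  have ha : 2 * π ^ 2 / 3 ≤ 7 := by nlinarith
  have ha0 : 0 < 2 * π ^ 2 / 3 := by positivity
  have ht : 36 ≤ x ^ 2 := by nlinarith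
  have hw2 : w ^ 2 = x ^ 2 - 2 * π ^ 2 / 3 := by
    rw [hw, Real.sq_sqrt (by nlinarith)]
  have hy2 : y ^ 2 = x ^ 2 + 2 * π ^ 2 / 3 := by
    rw [hy, Real.sq_sqrt (by nlinarith)]
  have hw6 : w ^ 6 = (x ^ 2 - 2 * π ^ 2 / 3) ^ 3 := by
    rw [show w ^ 6 = (w ^ 2) ^ 3 by ring, hw2]
  have hy6 : y ^ 6 = (x ^ 2 + 2 * π ^ 2 / 3) ^ 3 := by
    rw [show y ^ 6 = (y ^ 2) ^ 3 by ring, hy2]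
  have hx6 : x ^ 6 = (x ^ 2) ^ 3 := by ring
  rw [hw6, hy6, hx6]
  exact key_8 (x ^ 2) (2 * π ^ 2 / 3) ht ha0 ha
end

section
/- Let x be real with x ≥ 6, and set w = √(x² − 2π²/3) and y = √(x² + 2π²/3). Define G = ((1 + 1/w⁶)(1 + 1/y⁶))/(1 − 1/x⁶)². Then G ≤ 1 + 5/x⁶. -/
set_option maxHeartbeats 1000000 in
open Real in
theorem stmt_9 (x : ℝ) (hx : 6 ≤ x)
    (w y : ℝ) (hw : w = Real.sqrt (x ^ 2 - 2 * π ^ 2 / 3))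
    (hy : y = Real.sqrt (x ^ 2 + 2 * π ^ 2 / 3)) :
    ((1 + 1 / w ^ 6) * (1 + 1 / y ^ 6)) / (1 - 1 / x ^ 6) ^ 2 ≤ 1 + 5 / x ^ 6 := by
  have hpi1 : π ≤ 3.15 := Real.pi_lt_d2.le
  have hpi0 : 0 < π := Real.pi_pos
  have hpi : π ^ 2 ≤ 10 := by nlinarith
  have hpi2 : 0 < π ^ 2 := by positivity
  have ht : (36:ℝ) ≤ x ^ 2 := by nlinarith
  have hwnn : x ^ 2 - 2 * π ^ 2 / 3 ≥ 0 := by linarith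
  have hynn : x ^ 2 + 2 * π ^ 2 / 3 ≥ 0 := by linarith
  have hw2 : w ^ 2 = x ^ 2 - 2 * π ^ 2 / 3 := by
    rw [hw, Real.sq_sqrt hwnn]
  have hy2 : y ^ 2 = x ^ 2 + 2 * π ^ 2 / 3 := by
    rw [hy, Real.sq_sqrt hynn]
  have hw6 : w ^ 6 = (x ^ 2 - 2 * π ^ 2 / 3) ^ 3 := by rw [← hw2]; ring
  have hy6 : y ^ 6 = (x ^ 2 + 2 * π ^ 2 / 3) ^ 3 := by rw [← hy2]; ring
  set t := x ^ 2 with htdef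
  have h0 : (0:ℝ) ≤ t - 36 := by linarith
  have h7 : (0:ℝ) < t - 7 := by linarith
  have hA : (0:ℝ) < (t - 7) ^ 3 := by positivity
  have hB : (0:ℝ) < t ^ 3 := by positivity
  have hx6 : x ^ 6 = t ^ 3 := by rw [htdef]; ring
  have hw6' : (t - 7) ^ 3 ≤ w ^ 6 := by
    rw [hw6]
    have : t - 7 ≤ t - 2 * π ^ 2 / 3 := by linarith
    exact pow_le_pow_left₀ h7.le this 3
  have hy6' : t ^ 3 ≤ y ^ 6 := by
    rw [hy6]
    have : t ≤ t + 2 * π ^ 2 / 3 := by linarith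
    exact pow_le_pow_left₀ (by linarith) this 3
  have hwpos : (0:ℝ) < w ^ 6 := lt_of_lt_of_le hA hw6'
  have hypos : (0:ℝ) < y ^ 6 := lt_of_lt_of_le hB hy6'
  have hu : 1 / w ^ 6 ≤ 1 / (t - 7) ^ 3 := one_div_le_one_div_of_le hA hw6'
  have hv : 1 / y ^ 6 ≤ 1 / t ^ 3 := one_div_le_one_div_of_le hB hy6'
  have h1t : (1:ℝ) < t ^ 3 := by nlinarith
  have hden : (0:ℝ) < 1 - 1 / t ^ 3 := by
    have : 1 / t ^ 3 < 1 := by rw [div_lt_one hB]; exact h1t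
    linarith
  rw [hx6, div_le_iff₀ (by positivity)]
  have step1 : (1 + 1 / w ^ 6) * (1 + 1 / y ^ 6) ≤
      (1 + 1 / (t - 7) ^ 3) * (1 + 1 / t ^ 3) := by
    apply mul_le_mul (by linarith) (by linarith) (by positivity) (by positivity)
  have hD : 0 ≤ (t ^ 3 + 5) * (t ^ 3 - 1) ^ 2 * (t - 7) ^ 3 -
      ((t - 7) ^ 3 + 1) * (t ^ 3 + 1) * t ^ 6 := by
    nlinarith [pow_nonneg h0 2, pow_nonneg h0 3, pow_nonneg h0 4, pow_nonneg h0 5,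
      pow_nonneg h0 6, pow_nonneg h0 7, pow_nonneg h0 8, pow_nonneg h0 9]
  have step2 : (1 + 1 / (t - 7) ^ 3) * (1 + 1 / t ^ 3) ≤
      (1 + 5 / t ^ 3) * (1 - 1 / t ^ 3) ^ 2 := by
    have e1 : (1 + 1 / (t - 7) ^ 3) * (1 + 1 / t ^ 3) =
        (((t - 7) ^ 3 + 1) * (t ^ 3 + 1)) / ((t - 7) ^ 3 * t ^ 3) := by
      field_simp
    have e2 : (1 + 5 / t ^ 3) * (1 - 1 / t ^ 3) ^ 2 =
        ((t ^ 3 + 5) * (t ^ 3 - 1) ^ 2) / (t ^ 3) ^ 3 := by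
      field_simp
      try simp
      try tauto
    rw [e1, e2, div_le_div_iff₀ (by positivity) (by positivity)]
    nlinarith [mul_nonneg hB.le hD]
  calc (1 + 1 / w ^ 6) * (1 + 1 / y ^ 6)
      ≤ (1 + 1 / (t - 7) ^ 3) * (1 + 1 / t ^ 3) := step1
    _ ≤ (1 + 5 / t ^ 3) * (1 - 1 / t ^ 3) ^ 2 := step2
    _ = (1 + 5 / t ^ 3) * (1 - 1 / t ^ 3) ^ 2 := rfl
end

section
/- Let x be real with x ≥ 5, and set w = √(x² − 2π²/3) and y = √(x² + 2π²/3). Then 1 + 5π⁴/(9x⁴) + 5π⁸/(18x⁸) ≤ x⁵/((w·y)^(5/2)) ≤ 1 + 5π⁴/(9x⁴) + π⁸/(3x⁸). -/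
lemma aux1 (t : ℝ) (h0 : 0 ≤ t) (h1 : t ≤ 1/10) :
    (1+(5/4)*t+(45/32)*t^2)^4*(1-t)^5 ≤ 1 := by
  have p1 : t^1 ≤ (1/10:ℝ)^1 := pow_le_pow_left₀ h0 h1 1
  have p2 : t^2 ≤ (1/10:ℝ)^2 := pow_le_pow_left₀ h0 h1 2
  have p3 : t^3 ≤ (1/10:ℝ)^3 := pow_le_pow_left₀ h0 h1 3
  have p7 : t^7 ≤ (1/10:ℝ)^7 := pow_le_pow_left₀ h0 h1 7
  have p8 : t^8 ≤ (1/10:ℝ)^8 := pow_le_pow_left₀ h0 h1 8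
  have p9 : t^9 ≤ (1/10:ℝ)^9 := pow_le_pow_left₀ h0 h1 9
  have n4 : (0:ℝ) ≤ t^4 := pow_nonneg h0 4
  have n5 : (0:ℝ) ≤ t^5 := pow_nonneg h0 5
  have n6 : (0:ℝ) ≤ t^6 := pow_nonneg h0 6
  have n10 : (0:ℝ) ≤ t^10 := pow_nonneg h0 10
  have key : 0 ≤ 195/32 - 585/512*t - 351/1024*t^2 - 7215/512*t^3 + 167895/32768*t^4
      + 1061775/1048576*t^5 + 15272725/1048576*t^6 - 4051125/524288*t^7
      - 394875/524288*t^8 - 5923125/1048576*t^9 + 4100625/1048576*t^10 := by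
    nlinarith [p1, p2, p3, p7, p8, p9, n4, n5, n6, n10]
  nlinarith [mul_nonneg (pow_nonneg h0 3) key]

lemma aux2 (t : ℝ) (h0 : 0 ≤ t) (h1 : t ≤ 1/10) :
    1 ≤ (1+(5/4)*t+(27/16)*t^2)^4*(1-t)^5 := by
  have p1 : t^1 ≤ (1/10:ℝ)^1 := pow_le_pow_left₀ h0 h1 1
  have p3 : t^3 ≤ (1/10:ℝ)^3 := pow_le_pow_left₀ h0 h1 3
  have p5 : t^5 ≤ (1/10:ℝ)^5 := pow_le_pow_left₀ h0 h1 5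
  have p7 : t^7 ≤ (1/10:ℝ)^7 := pow_le_pow_left₀ h0 h1 7
  have p9 : t^9 ≤ (1/10:ℝ)^9 := pow_le_pow_left₀ h0 h1 9
  have p11 : t^11 ≤ (1/10:ℝ)^11 := pow_le_pow_left₀ h0 h1 11
  have n2 : (0:ℝ) ≤ t^2 := pow_nonneg h0 2
  have n4 : (0:ℝ) ≤ t^4 := pow_nonneg h0 4
  have n6 : (0:ℝ) ≤ t^6 := pow_nonneg h0 6
  have n8 : (0:ℝ) ≤ t^8 := pow_nonneg h0 8
  have n10 : (0:ℝ) ≤ t^10 := pow_nonneg h0 10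
  have key : 0 ≤ 9/8 - 15/2*t + 459/256*t^2 - 1521/256*t^3 + 46041/2048*t^4
      - 35883/4096*t^5 + 713601/65536*t^6 - 2040469/65536*t^7 + 475605/32768*t^8
      - 225261/32768*t^9 + 1082565/65536*t^10 - 531441/65536*t^11 := by
    nlinarith [p1, p3, p5, p7, p9, p11, n2, n4, n6, n8, n10]
  nlinarith [mul_nonneg (pow_nonneg h0 2) key]

open Real in
theorem stmt_10 (x : ℝ) (hx : 5 ≤ x)
    (w y : ℝ) (hw : w = Real.sqrt (x ^ 2 - 2 * π ^ 2 / 3))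
    (hy : y = Real.sqrt (x ^ 2 + 2 * π ^ 2 / 3)) :
    1 + 5 * π ^ 4 / (9 * x ^ 4) + 5 * π ^ 8 / (18 * x ^ 8)
      ≤ x ^ 5 / (w * y) ^ ((5 : ℝ) / 2) ∧
    x ^ 5 / (w * y) ^ ((5 : ℝ) / 2)
      ≤ 1 + 5 * π ^ 4 / (9 * x ^ 4) + π ^ 8 / (3 * x ^ 8) := by
  have hπ : π < 3.15 := Real.pi_lt_d2
  have hπ0 : 0 < π := Real.pi_pos
  have hx0 : (0:ℝ) < x := by linarith
  have ha : 0 ≤ x ^ 2 - 2 * π ^ 2 / 3 := by nlinarith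
  have hπ2 : π ^ 2 ≤ 10 := by nlinarith
  have hπ4 : π ^ 4 ≤ 100 := by nlinarith [sq_nonneg π, sq_nonneg (π^2 - 10)]
  have hx2 : 25 ≤ x ^ 2 := by nlinarith
  have hx4' : 625 ≤ x ^ 4 := by nlinarith [sq_nonneg (x^2 - 25)]
  have hu : 0 < x ^ 4 - 4 * π ^ 4 / 9 := by linarith
  set u : ℝ := x ^ 4 - 4 * π ^ 4 / 9 with hudef
  have hwy : w * y = Real.sqrt u := by
    rw [hw, hy, ← Real.sqrt_mul ha]
    congr 1; ring
  have hpow : (w * y) ^ ((5 : ℝ) / 2) = u ^ ((5 : ℝ) / 4) := by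
    rw [hwy, Real.sqrt_eq_rpow, ← Real.rpow_mul hu.le]; norm_num
  have hup : 0 < u ^ ((5 : ℝ) / 4) := Real.rpow_pos_of_pos hu _
  have h4 : (u ^ ((5 : ℝ) / 4)) ^ (4 : ℕ) = u ^ (5 : ℕ) := by
    rw [← Real.rpow_natCast (u ^ ((5 : ℝ) / 4)) 4, ← Real.rpow_mul hu.le,
      ← Real.rpow_natCast u 5]
    norm_num
  set r : ℝ := x ^ 5 / u ^ ((5 : ℝ) / 4) with hrdef
  have hr0 : 0 < r := div_pos (by positivity) hup
  have hr4 : r ^ (4 : ℕ) = x ^ 20 / u ^ 5 := by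
    rw [hrdef, div_pow, h4, ← pow_mul]
  set t : ℝ := 4 * π ^ 4 / 9 / x ^ 4 with htdef
  have ht0 : 0 ≤ t := by positivity
  have ht1 : t ≤ 1 / 10 := by
    rw [htdef, div_le_iff₀ (by positivity : (0:ℝ) < x ^ 4)]
    linarith
  have hx4 : (0:ℝ) < x ^ 4 := by positivity
  have hu_eq : u = x ^ 4 * (1 - t) := by
    rw [htdef, hudef]; field_simp
  have hu5 : (0:ℝ) < u ^ 5 := by positivity
  have hLeq : 1 + 5 * π ^ 4 / (9 * x ^ 4) + 5 * π ^ 8 / (18 * x ^ 8)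
      = 1 + (5/4) * t + (45/32) * t ^ 2 := by
    rw [htdef]; field_simp; ring
  have hUeq : 1 + 5 * π ^ 4 / (9 * x ^ 4) + π ^ 8 / (3 * x ^ 8)
      = 1 + (5/4) * t + (27/16) * t ^ 2 := by
    rw [htdef]; field_simp; ring
  have hL0 : (0:ℝ) ≤ 1 + (5/4) * t + (45/32) * t ^ 2 := by positivity
  have hU0 : (0:ℝ) ≤ 1 + (5/4) * t + (27/16) * t ^ 2 := by positivity
  rw [hpow]
  constructor
  · rw [hLeq]
    refine le_of_pow_le_pow_left₀ (n := 4) (by norm_num) hr0.le ?_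
    rw [hr4, le_div_iff₀ hu5]
    calc (1 + (5/4) * t + (45/32) * t ^ 2) ^ 4 * u ^ 5
        = ((1 + (5/4) * t + (45/32) * t ^ 2) ^ 4 * (1 - t) ^ 5) * x ^ 20 := by
          rw [hu_eq]; ring
      _ ≤ 1 * x ^ 20 := by
          have := aux1 t ht0 ht1
          have h20 : (0:ℝ) ≤ x ^ 20 := by positivity
          exact mul_le_mul_of_nonneg_right this h20
      _ = x ^ 20 := by ring
  · rw [hUeq]
    refine le_of_pow_le_pow_left₀ (n := 4) (by norm_num) hU0 ?_
    rw [hr4, div_le_iff₀ hu5]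
    calc x ^ 20 = 1 * x ^ 20 := by ring
      _ ≤ ((1 + (5/4) * t + (27/16) * t ^ 2) ^ 4 * (1 - t) ^ 5) * x ^ 20 := by
          have := aux2 t ht0 ht1
          have h20 : (0:ℝ) ≤ x ^ 20 := by positivity
          exact mul_le_mul_of_nonneg_right this h20
      _ = (1 + (5/4) * t + (27/16) * t ^ 2) ^ 4 * u ^ 5 := by
          rw [hu_eq]; ring
end

section
/- Let x be real with x ≥ 6, and set w = √(x² − 2π²/3) and y = √(x² + 2π²/3). Then w > x − π²/(3x) − π⁴/(18x³) − π⁶/(54x⁵) − 5π⁸/(324x⁷) and w < x − π²/(3x) − π⁴/(18x³) − π⁶/(54x⁵). -/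
set_option maxHeartbeats 1000000 in
open Real in
theorem stmt_12 (x : ℝ) (hx : 6 ≤ x)
    (w : ℝ) (hw : w = Real.sqrt (x ^ 2 - 2 * π ^ 2 / 3)) :
    w > x - π ^ 2 / (3 * x) - π ^ 4 / (18 * x ^ 3) - π ^ 6 / (54 * x ^ 5)
        - 5 * π ^ 8 / (324 * x ^ 7) ∧
    w < x - π ^ 2 / (3 * x) - π ^ 4 / (18 * x ^ 3) - π ^ 6 / (54 * x ^ 5) := by
  have hx0 : (0:ℝ) < x := by linarith
  have hpi : π < 3.15 := Real.pi_lt_d2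
  have hpi0 : 0 < π := Real.pi_pos
  obtain ⟨u, hu_def⟩ : ∃ u : ℝ, u = π ^ 2 / (3 * x ^ 2) := ⟨_, rfl⟩
  have hu0 : 0 < u := by rw [hu_def]; positivity
  have hu1 : u < 1/10 := by
    rw [hu_def, div_lt_iff₀ (by positivity)]
    nlinarith [sq_nonneg (x - 6)]
  have hu2 : u^2 < 1/100 := by nlinarith
  have hu3 : u^3 < 1/1000 := by nlinarith
  have hu4 : u^4 < 1/10000 := by nlinarith
  have hueq : π ^ 2 = u * (3 * x ^ 2) := by
    rw [hu_def]; field_simp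
  have hLe : x - π ^ 2 / (3 * x) - π ^ 4 / (18 * x ^ 3) - π ^ 6 / (54 * x ^ 5)
      - 5 * π ^ 8 / (324 * x ^ 7)
      = x * (1 - u - u^2/2 - u^3/2 - 5*u^4/4) := by
    rw [show π^4 = (π^2)^2 by ring, show π^6 = (π^2)^3 by ring,
        show π^8 = (π^2)^4 by ring, hueq]
    field_simp; ring
  have hUe : x - π ^ 2 / (3 * x) - π ^ 4 / (18 * x ^ 3) - π ^ 6 / (54 * x ^ 5)
      = x * (1 - u - u^2/2 - u^3/2) := by
    rw [show π^4 = (π^2)^2 by ring, show π^6 = (π^2)^3 by ring, hueq]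
    field_simp; ring
  have hse : x ^ 2 - 2 * π ^ 2 / 3 = x ^ 2 * (1 - 2*u) := by
    rw [hueq]; ring
  have hpoly : (0:ℝ) < 1 - u - u^2/2 - u^3/2 - 5*u^4/4 := by nlinarith
  have hpolyU : (0:ℝ) < 1 - u - u^2/2 - u^3/2 := by nlinarith
  have hL0 : 0 < x * (1 - u - u^2/2 - u^3/2 - 5*u^4/4) := mul_pos hx0 hpoly
  have hU0 : 0 < x * (1 - u - u^2/2 - u^3/2) := mul_pos hx0 hpolyU
  constructor
  · rw [hw, hLe, gt_iff_lt, hse, ← Real.sqrt_sq hL0.le]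
    apply Real.sqrt_lt_sqrt (by positivity)
    have key : (0:ℝ) < 5/4 - 3*u - 3/2*u^2 - 5/4*u^3 - 25/16*u^4 := by nlinarith
    have pos : 0 < x^2 * u^4 * (5/4 - 3*u - 3/2*u^2 - 5/4*u^3 - 25/16*u^4) :=
      mul_pos (mul_pos (pow_pos hx0 2) (pow_pos hu0 4)) key
    have e : x ^ 2 * (1 - 2*u) - (x * (1 - u - u^2/2 - u^3/2 - 5*u^4/4))^2
        = x^2 * u^4 * (5/4 - 3*u - 3/2*u^2 - 5/4*u^3 - 25/16*u^4) := by ring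
    linarith
  · rw [hw, hUe, hse, ← Real.sqrt_sq hU0.le]
    apply Real.sqrt_lt_sqrt (by nlinarith)
    have key : (0:ℝ) < 5/4 + u/2 + u^2/4 := by positivity
    have pos : 0 < x^2 * u^4 * (5/4 + u/2 + u^2/4) :=
      mul_pos (mul_pos (pow_pos hx0 2) (pow_pos hu0 4)) key
    have e : (x * (1 - u - u^2/2 - u^3/2))^2 - x ^ 2 * (1 - 2*u)
        = x^2 * u^4 * (5/4 + u/2 + u^2/4) := by ring
    linarith
end

section
/- Let x be real with x ≥ 6, and set y = √(x² + 2π²/3). Then y > x + π²/(3x) − π⁴/(18x³) + π⁶/(54x⁵) − 5π⁸/(324x⁷) and y < x + π²/(3x) − π⁴/(18x³) + π⁶/(54x⁵). -/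
open Real in
theorem stmt_13 (x : ℝ) (hx : 6 ≤ x)
    (y : ℝ) (hy : y = Real.sqrt (x ^ 2 + 2 * π ^ 2 / 3)) :
    y > x + π ^ 2 / (3 * x) - π ^ 4 / (18 * x ^ 3) + π ^ 6 / (54 * x ^ 5)
        - 5 * π ^ 8 / (324 * x ^ 7) ∧
    y < x + π ^ 2 / (3 * x) - π ^ 4 / (18 * x ^ 3) + π ^ 6 / (54 * x ^ 5) := by
  have hx0 : (0:ℝ) < x := by linarith
  have hπ0 : (0:ℝ) < π := Real.pi_pos
  have hπ2 : π ^ 2 < 10 := by nlinarith [Real.pi_lt_d2]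
  have hx2 : (36:ℝ) ≤ x ^ 2 := by nlinarith
  have hx4 : (1296:ℝ) ≤ x ^ 4 := by nlinarith
  have hπ4 : π ^ 4 < 100 := by nlinarith [sq_nonneg π]
  subst hy
  constructor
  · -- lower bound
    have hLpos : 0 ≤ x + π ^ 2 / (3 * x) - π ^ 4 / (18 * x ^ 3) + π ^ 6 / (54 * x ^ 5)
        - 5 * π ^ 8 / (324 * x ^ 7) := by
      have h2 : π ^ 4 / (18 * x ^ 3) ≤ 1 := by
        rw [div_le_one (by positivity)]
        nlinarith
      have h4 : 5 * π ^ 8 / (324 * x ^ 7) ≤ 1 := by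
        rw [div_le_one (by positivity)]
        have hx7 : (6:ℝ) ^ 7 ≤ x ^ 7 := pow_le_pow_left₀ (by norm_num) hx 7
        have hπ8 : π ^ 8 < 10000 := by nlinarith [pow_pos hπ0 4]
        nlinarith
      have h1 : 0 ≤ π ^ 2 / (3 * x) := by positivity
      have h3 : 0 ≤ π ^ 6 / (54 * x ^ 5) := by positivity
      linarith
    rw [gt_iff_lt, Real.lt_sqrt hLpos, ← sub_pos]
    have key : x ^ 2 + 2 * π ^ 2 / 3 -
        (x + π ^ 2 / (3 * x) - π ^ 4 / (18 * x ^ 3) + π ^ 6 / (54 * x ^ 5)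
          - 5 * π ^ 8 / (324 * x ^ 7)) ^ 2
        = π ^ 8 * (1620 * x ^ 8 + 1296 * x ^ 6 * π ^ 2 - 216 * x ^ 4 * π ^ 4
            + 60 * x ^ 2 * π ^ 6 - 25 * π ^ 8) / (324 * x ^ 7) ^ 2 := by
      field_simp
      ring
    rw [key]
    apply div_pos _ (by positivity)
    have hnum : 0 < 1620 * x ^ 8 + 1296 * x ^ 6 * π ^ 2 - 216 * x ^ 4 * π ^ 4
        + 60 * x ^ 2 * π ^ 6 - 25 * π ^ 8 := by
      nlinarith [pow_pos hπ0 6, pow_pos hπ0 2, pow_pos hx0 4, pow_pos hx0 6,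
        mul_le_mul hx4 hx4 (by norm_num) (le_of_lt (pow_pos hx0 4)),
        sq_nonneg (π^4), mul_pos (pow_pos hx0 2) (pow_pos hπ0 6)]
    positivity
  · -- upper bound
    have hUpos : 0 < x + π ^ 2 / (3 * x) - π ^ 4 / (18 * x ^ 3) + π ^ 6 / (54 * x ^ 5) := by
      have h2 : π ^ 4 / (18 * x ^ 3) ≤ 1 := by
        rw [div_le_one (by positivity)]
        nlinarith
      have h1 : 0 ≤ π ^ 2 / (3 * x) := by positivity
      have h3 : 0 ≤ π ^ 6 / (54 * x ^ 5) := by positivity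
      linarith
    rw [Real.sqrt_lt' hUpos, ← sub_pos]
    have key : (x + π ^ 2 / (3 * x) - π ^ 4 / (18 * x ^ 3) + π ^ 6 / (54 * x ^ 5)) ^ 2
        - (x ^ 2 + 2 * π ^ 2 / 3)
        = π ^ 8 * (45 * x ^ 4 - 6 * x ^ 2 * π ^ 2 + π ^ 4) / (54 * x ^ 5) ^ 2 := by
      field_simp
      ring
    rw [key]
    apply div_pos _ (by positivity)
    have hnum : 0 < 45 * x ^ 4 - 6 * x ^ 2 * π ^ 2 + π ^ 4 := by
      nlinarith [sq_nonneg (3 * x ^ 2 - π ^ 2), pow_pos hx0 4]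
    positivity
end

section
/- Let x be real with x ≥ 6, α > 0 real, and set w = √(x² − 2π²/3), y = √(x² + 2π²/3). Then −√α·π⁴/(9x³) − 5√α·π⁸/(162x⁷) < √α·(w + y − 2x) < −√α·π⁴/(9x³). -/
open Real

private lemma pow_chain (u : ℝ) (h1 : 0 < u) (h2 : u ≤ 0.19) :
    u^2 ≤ 0.19*u ∧ u^3 ≤ 0.19*u^2 ∧ u^4 ≤ 0.19*u^3 ∧ u^5 ≤ 0.19*u^4 ∧
    u^6 ≤ 0.19*u^5 ∧ u^7 ≤ 0.19*u^6 ∧ u^8 ≤ 0.19*u^7 := by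
  refine ⟨?_, ?_, ?_, ?_, ?_, ?_, ?_⟩ <;>
    nlinarith [pow_pos h1 1, pow_pos h1 2, pow_pos h1 3, pow_pos h1 4,
      pow_pos h1 5, pow_pos h1 6, pow_pos h1 7]

private lemma sqrt_sub_lo (u : ℝ) (h1 : 0 < u) (h2 : u ≤ 0.19) :
    1 - u/2 - u^2/8 - u^3/16 - 5*u^4/64 < Real.sqrt (1 - u) := by
  obtain ⟨p2, p3, p4, p5, p6, p7, p8⟩ := pow_chain u h1 h2
  refine (Real.lt_sqrt ?_).mpr ?_ <;>
    nlinarith [pow_pos h1 1, pow_pos h1 2, pow_pos h1 3, pow_pos h1 4,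
      pow_pos h1 5, pow_pos h1 6, pow_pos h1 7, pow_pos h1 8]

private lemma sqrt_sub_up (u : ℝ) (h1 : 0 < u) (h2 : u ≤ 0.19) :
    Real.sqrt (1 - u) < 1 - u/2 - u^2/8 - u^3/16 := by
  obtain ⟨p2, p3, p4, p5, p6, p7, p8⟩ := pow_chain u h1 h2
  refine (Real.sqrt_lt' ?_).mpr ?_ <;>
    nlinarith [pow_pos h1 1, pow_pos h1 2, pow_pos h1 3, pow_pos h1 4,
      pow_pos h1 5, pow_pos h1 6]

private lemma sqrt_add_lo (u : ℝ) (h1 : 0 < u) (h2 : u ≤ 0.19) :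
    1 + u/2 - u^2/8 + u^3/16 - 5*u^4/64 < Real.sqrt (1 + u) := by
  obtain ⟨p2, p3, p4, p5, p6, p7, p8⟩ := pow_chain u h1 h2
  refine (Real.lt_sqrt ?_).mpr ?_ <;>
    nlinarith [pow_pos h1 1, pow_pos h1 2, pow_pos h1 3, pow_pos h1 4,
      pow_pos h1 5, pow_pos h1 6, pow_pos h1 7, pow_pos h1 8]

private lemma sqrt_add_up (u : ℝ) (h1 : 0 < u) (h2 : u ≤ 0.19) :
    Real.sqrt (1 + u) < 1 + u/2 - u^2/8 + u^3/16 := by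
  obtain ⟨p2, p3, p4, p5, p6, p7, p8⟩ := pow_chain u h1 h2
  refine (Real.sqrt_lt' ?_).mpr ?_ <;>
    nlinarith [pow_pos h1 1, pow_pos h1 2, pow_pos h1 3, pow_pos h1 4,
      pow_pos h1 5, pow_pos h1 6]

open Real in
theorem stmt_14 (x α : ℝ) (hx : 6 ≤ x) (hα : 0 < α)
    (w y : ℝ) (hw : w = Real.sqrt (x ^ 2 - 2 * π ^ 2 / 3))
    (hy : y = Real.sqrt (x ^ 2 + 2 * π ^ 2 / 3)) :
    -Real.sqrt α * π ^ 4 / (9 * x ^ 3) - 5 * Real.sqrt α * π ^ 8 / (162 * x ^ 7)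
      < Real.sqrt α * (w + y - 2 * x) ∧
    Real.sqrt α * (w + y - 2 * x) < -Real.sqrt α * π ^ 4 / (9 * x ^ 3) := by
  have hx0 : (0:ℝ) < x := by linarith
  have hp1 : π < 3.141593 := Real.pi_lt_d6
  have hp0 : 3.141592 < π := Real.pi_gt_d6
  set u : ℝ := 2 * π ^ 2 / (3 * x ^ 2) with hu
  have hu0 : 0 < u := by positivity
  have hu19 : u ≤ 0.19 := by
    rw [hu, div_le_iff₀ (by positivity)]
    nlinarith [sq_nonneg (x - 6)]
  have hw' : w = x * Real.sqrt (1 - u) := by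
    rw [hw, show x ^ 2 - 2 * π ^ 2 / 3 = x ^ 2 * (1 - u) by
      rw [hu]; field_simp]
    rw [Real.sqrt_mul (by positivity), Real.sqrt_sq hx0.le]
  have hy' : y = x * Real.sqrt (1 + u) := by
    rw [hy, show x ^ 2 + 2 * π ^ 2 / 3 = x ^ 2 * (1 + u) by
      rw [hu]; field_simp]
    rw [Real.sqrt_mul (by positivity), Real.sqrt_sq hx0.le]
  have h1 := sqrt_sub_lo u hu0 hu19
  have h2 := sqrt_sub_up u hu0 hu19
  have h3 := sqrt_add_lo u hu0 hu19
  have h4 := sqrt_add_up u hu0 hu19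
  -- bounds on s := w + y - 2x
  have hup : w + y - 2 * x < -(x * u ^ 2 / 4) := by
    rw [hw', hy']; nlinarith [h2, h4]
  have hlo : -(x * u ^ 2 / 4) - 5 * x * u ^ 4 / 32 < w + y - 2 * x := by
    rw [hw', hy']; nlinarith [h1, h3]
  have hq1 : x * u ^ 2 / 4 = π ^ 4 / (9 * x ^ 3) := by
    rw [hu]; field_simp; ring
  have hq2 : 5 * x * u ^ 4 / 32 = 5 * π ^ 8 / (162 * x ^ 7) := by
    rw [hu]; field_simp; ring
  have hs : 0 < Real.sqrt α := Real.sqrt_pos.mpr hα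
  constructor
  · have := mul_lt_mul_of_pos_left hlo hs
    calc -Real.sqrt α * π ^ 4 / (9 * x ^ 3) - 5 * Real.sqrt α * π ^ 8 / (162 * x ^ 7)
        = Real.sqrt α * (-(x * u ^ 2 / 4) - 5 * x * u ^ 4 / 32) := by
          rw [hq1, hq2]; field_simp
      _ < Real.sqrt α * (w + y - 2 * x) := this
  · have := mul_lt_mul_of_pos_left hup hs
    calc Real.sqrt α * (w + y - 2 * x)
        < Real.sqrt α * (-(x * u ^ 2 / 4)) := this
      _ = -Real.sqrt α * π ^ 4 / (9 * x ^ 3) := by rw [hq1]; field_simp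
end
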